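/- Let A, B, and C be model categories, and let F : A ⇄ B : G and L : B ⇄ C : R be Quillen pairs, so that the composite L∘F : A ⇄ C : G∘R is also a Quillen pair. Suppose that (F, G) and (L∘F, G∘R) are Quillen equivalences, that every object of A is cofibrant, and that every object of B is fibrant. Then (L, R) is also a Quillen equivalence; that is, for every cofibrant object X of B, every fibrant object U of C, and every morphism f : L X ⟶ U, f is a weak equivalence in C if and only if its adjunct X ⟶ R U is a weak equivalence in B. -/

import Mathlib

/-!
Statement 1: Given Quillen pairs `F : A ⇄ B : G` and `L : B ⇄ C : R` such that `(F, G)` and the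
composite `(L ∘ F, G ∘ R)` are Quillen equivalences, with every object of `A` cofibrant and
every object of `B` fibrant, the pair `(L, R)` is also a Quillen equivalence.
-/

open CategoryTheory CategoryTheory.Limits

universe v₁ u₁ v₂ u₂ v₃ u₃ v u v' u'

/-- `f` is a retract of `g` in the arrow category. -/
def IsRetractOf {C : Type u} [Category.{v} C] {X Y Z W : C} (f : X ⟶ Y) (g : Z ⟶ W) : Prop :=
  ∃ (i : X ⟶ Z) (r : Z ⟶ X) (i' : Y ⟶ W) (r' : W ⟶ Y),
    i ≫ r = 𝟙 X ∧ i' ≫ r' = 𝟙 Y ∧ i ≫ g = f ≫ i' ∧ g ≫ r' = r ≫ f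

/-- A model structure on a category `C`: three classes of morphisms (weak equivalences,
cofibrations, fibrations) satisfying the usual model category axioms. -/
structure ModelStructure (C : Type u) [Category.{v} C] where
  W : MorphismProperty C
  Cof : MorphismProperty C
  Fib : MorphismProperty C
  W_id : ∀ X : C, W (𝟙 X)
  W_comp : ∀ {X Y Z : C} (f : X ⟶ Y) (g : Y ⟶ Z), W f → W g → W (f ≫ g)
  W_of_comp_left : ∀ {X Y Z : C} (f : X ⟶ Y) (g : Y ⟶ Z), W f → W (f ≫ g) → W g
  W_of_comp_right : ∀ {X Y Z : C} (f : X ⟶ Y) (g : Y ⟶ Z), W g → W (f ≫ g) → W f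
  W_retract : ∀ {X Y Z W' : C} (f : X ⟶ Y) (g : Z ⟶ W'), IsRetractOf f g → W g → W f
  Cof_retract : ∀ {X Y Z W' : C} (f : X ⟶ Y) (g : Z ⟶ W'), IsRetractOf f g → Cof g → Cof f
  Fib_retract : ∀ {X Y Z W' : C} (f : X ⟶ Y) (g : Z ⟶ W'), IsRetractOf f g → Fib g → Fib f
  lift_cof_trivFib : ∀ {A B X Y : C} (i : A ⟶ B) (p : X ⟶ Y),
    Cof i → Fib p → W p → HasLiftingProperty i p
  lift_trivCof_fib : ∀ {A B X Y : C} (i : A ⟶ B) (p : X ⟶ Y),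
    Cof i → W i → Fib p → HasLiftingProperty i p
  fact_cof_trivFib : ∀ {X Y : C} (f : X ⟶ Y),
    ∃ (Z : C) (i : X ⟶ Z) (p : Z ⟶ Y), Cof i ∧ Fib p ∧ W p ∧ i ≫ p = f
  fact_trivCof_fib : ∀ {X Y : C} (f : X ⟶ Y),
    ∃ (Z : C) (i : X ⟶ Z) (p : Z ⟶ Y), Cof i ∧ W i ∧ Fib p ∧ i ≫ p = f

/-- A Quillen pair: the left adjoint preserves cofibrations and trivial cofibrations. -/
def IsQuillenPair {C : Type u} [Category.{v} C] {D : Type u'} [Category.{v'} D]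
    (MC : ModelStructure C) (MD : ModelStructure D) (F : C ⥤ D) : Prop :=
  (∀ {X Y : C} (f : X ⟶ Y), MC.Cof f → MD.Cof (F.map f)) ∧
  (∀ {X Y : C} (f : X ⟶ Y), MC.Cof f → MC.W f → MD.Cof (F.map f) ∧ MD.W (F.map f))

/-- A Quillen pair is a Quillen equivalence if for every cofibrant `X` and fibrant `Y`,
a map `F X ⟶ Y` is a weak equivalence iff its adjunct `X ⟶ G Y` is. -/
def IsQuillenEquivalence {C : Type u} [Category.{v} C] {D : Type u'} [Category.{v'} D]
    [HasInitial C] [HasTerminal D]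
    (MC : ModelStructure C) (MD : ModelStructure D)
    {F : C ⥤ D} {G : D ⥤ C} (adj : F ⊣ G) : Prop :=
  ∀ (X : C) (Y : D), MC.Cof (initial.to X) → MD.Fib (terminal.from Y) →
    ∀ f : F.obj X ⟶ Y, MD.W f ↔ MC.W (adj.homEquiv X Y f)

/-!
Write `ε : F (G X) ⟶ X` for the counit. Since `G X` is cofibrant and `X` fibrant, `ε` is a weak
equivalence, and so is `L ε` by Ken Brown's lemma, `F (G X)` and `X` being cofibrant. For
`f : L X ⟶ U`, the adjunct of `L ε ≫ f` under `L ∘ F ⊣ G ∘ R` is `G` applied to the adjunct `f♭`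
of `f` under `L ⊣ R`; and since `ε` is a weak equivalence, `G` preserves and reflects weak
equivalences between fibrant objects of `B`. Two-out-of-three then gives
`W f ↔ W (L ε ≫ f) ↔ W (G f♭) ↔ W f♭`.
-/

namespace ModelStructure

variable {D : Type u} [Category.{v} D] (M : ModelStructure D)

theorem W_comp_iff_right {X Y Z : D} {f : X ⟶ Y} (hf : M.W f) (g : Y ⟶ Z) :
    M.W (f ≫ g) ↔ M.W g :=
  ⟨M.W_of_comp_left f g hf, M.W_comp f g hf⟩

theorem cof_eq_llp : M.Cof = (M.Fib ⊓ M.W).llp := by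
  ext X Y i
  refine ⟨fun hi _ _ p hp => M.lift_cof_trivFib i p hi hp.1 hp.2, fun hi => ?_⟩
  obtain ⟨Z, c, p, hc, hpF, hpW, hfac⟩ := M.fact_cof_trivFib i
  have := hi p ⟨hpF, hpW⟩
  have sq : CommSq c i p (𝟙 Y) := ⟨by simp [hfac]⟩
  -- lifting `𝟙 Y` against `p` exhibits `i` as a retract of `c`
  exact M.Cof_retract i c ⟨𝟙 X, 𝟙 X, sq.lift, p, by simp, sq.fac_right,
    by simp [sq.fac_left], by simp [hfac]⟩ hc

theorem cof_of_isIso {X Y : D} (i : X ⟶ Y) [IsIso i] : M.Cof i := by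
  rw [cof_eq_llp]
  exact MorphismProperty.llp_of_isIso _ i

theorem cof_comp {X Y Z : D} {i : X ⟶ Y} {j : Y ⟶ Z} (hi : M.Cof i) (hj : M.Cof j) :
    M.Cof (i ≫ j) := by
  rw [cof_eq_llp] at *
  exact MorphismProperty.comp_mem _ i j hi hj

theorem cof_of_isPushout {A A' B B' : D} {f : A ⟶ A'} {g : A ⟶ B} {f' : B ⟶ B'}
    {g' : A' ⟶ B'} (sq : IsPushout g f f' g') (hf : M.Cof f) : M.Cof f' := by
  rw [cof_eq_llp] at *
  exact MorphismProperty.of_isPushout sq hf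

section Coproduct

variable [HasInitial D] [HasBinaryCoproducts D]

theorem cof_coprod_inl {X Y : D} (hY : M.Cof (initial.to Y)) :
    M.Cof (coprod.inl : X ⟶ X ⨿ Y) :=
  M.cof_of_isPushout (IsPushout.of_hasBinaryCoproduct' X Y) hY

theorem cof_coprod_inr {X Y : D} (hX : M.Cof (initial.to X)) :
    M.Cof (coprod.inr : Y ⟶ X ⨿ Y) :=
  M.cof_of_isPushout (IsPushout.of_hasBinaryCoproduct' X Y).flip hX

theorem exists_brown_factorization {X Y : D} (w : X ⟶ Y) (hX : M.Cof (initial.to X))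
    (hY : M.Cof (initial.to Y)) :
    ∃ (Z : D) (i : X ⟶ Z) (s : Y ⟶ Z) (p : Z ⟶ Y),
      M.Cof i ∧ M.Cof s ∧ M.W p ∧ i ≫ p = w ∧ s ≫ p = 𝟙 Y := by
  obtain ⟨Z, j, p, hj, -, hpW, hfac⟩ := M.fact_cof_trivFib (coprod.desc w (𝟙 Y))
  exact ⟨Z, coprod.inl ≫ j, coprod.inr ≫ j, p, M.cof_comp (M.cof_coprod_inl hY) hj,
    M.cof_comp (M.cof_coprod_inr hX) hj, hpW,
    by rw [Category.assoc, hfac, coprod.inl_desc], by rw [Category.assoc, hfac, coprod.inr_desc]⟩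

end Coproduct

end ModelStructure

namespace IsQuillenPair

variable {C : Type u} [Category.{v} C] {D : Type u'} [Category.{v'} D]
  {MC : ModelStructure C} {MD : ModelStructure D} {F : C ⥤ D}

theorem cof_initial_to_obj [HasInitial C] [HasInitial D] (hF : IsQuillenPair MC MD F)
    {G : D ⥤ C} (adj : F ⊣ G) {X : C} (hX : MC.Cof (initial.to X)) :
    MD.Cof (initial.to (F.obj X)) := by
  have := adj.leftAdjoint_preservesColimits
  rw [show initial.to (F.obj X) = (PreservesInitial.iso F).inv ≫ F.map (initial.to X) from
    initial.hom_ext _ _]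
  exact MD.cof_comp (MD.cof_of_isIso _) (hF.1 _ hX)

/-- Ken Brown's lemma. -/
theorem W_map_of_cofibrant [HasInitial C] [HasBinaryCoproducts C] (hF : IsQuillenPair MC MD F)
    {X Y : C} {w : X ⟶ Y} (hw : MC.W w) (hX : MC.Cof (initial.to X))
    (hY : MC.Cof (initial.to Y)) : MD.W (F.map w) := by
  obtain ⟨Z, i, s, p, hi, hs, hpW, rfl, hsp⟩ := MC.exists_brown_factorization w hX hY
  have hiW : MD.W (F.map i) := (hF.2 i hi (MC.W_of_comp_right i p hpW hw)).2
  have hsW : MD.W (F.map s) :=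
    (hF.2 s hs (MC.W_of_comp_right s p hpW (hsp ▸ MC.W_id Y))).2
  have hpW' : MD.W (F.map p) := by
    rw [← MD.W_comp_iff_right hsW, ← F.map_comp, hsp, F.map_id]
    exact MD.W_id _
  rw [F.map_comp]
  exact MD.W_comp _ _ hiW hpW'

end IsQuillenPair

theorem CategoryTheory.Adjunction.homEquiv_counit_comp {C : Type u} [Category.{v} C] {D : Type u'}
    [Category.{v'} D] {F : C ⥤ D} {G : D ⥤ C} (adj : F ⊣ G) {Y Y' : D} (g : Y ⟶ Y') :
    adj.homEquiv (G.obj Y) Y' (adj.counit.app Y ≫ g) = G.map g := by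
  simp [Adjunction.homEquiv_unit]

namespace IsQuillenEquivalence

variable {C : Type u} [Category.{v} C] {D : Type u'} [Category.{v'} D] [HasInitial C]
  [HasTerminal D] {MC : ModelStructure C} {MD : ModelStructure D} {F : C ⥤ D} {G : D ⥤ C}
  {adj : F ⊣ G}

theorem W_counit_app (h : IsQuillenEquivalence MC MD adj) {Y : D}
    (hGY : MC.Cof (initial.to (G.obj Y))) (hY : MD.Fib (terminal.from Y)) :
    MD.W (adj.counit.app Y) := by
  rw [h _ _ hGY hY, ← adj.homEquiv_symm_id, Equiv.apply_symm_apply]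
  exact MC.W_id _

theorem W_iff_W_map (h : IsQuillenEquivalence MC MD adj) {Y Y' : D} (g : Y ⟶ Y')
    (hGY : MC.Cof (initial.to (G.obj Y))) (hY : MD.Fib (terminal.from Y))
    (hY' : MD.Fib (terminal.from Y')) : MD.W g ↔ MC.W (G.map g) := by
  rw [← MD.W_comp_iff_right (h.W_counit_app hGY hY), h _ _ hGY hY',
    adj.homEquiv_counit_comp]

end IsQuillenEquivalence

theorem quillen_equivalence_of_comp_general
    {A : Type u₁} [Category.{v₁} A] {B : Type u₂} [Category.{v₂} B] {C : Type u₃} [Category.{v₃} C]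
    [HasColimits B]
    [HasInitial A] [HasInitial B] [HasTerminal B] [HasTerminal C]
    (MA : ModelStructure A) (MB : ModelStructure B) (MC : ModelStructure C)
    {F : A ⥤ B} {G : B ⥤ A} (adjFG : F ⊣ G)
    {L : B ⥤ C} {R : C ⥤ B} (adjLR : L ⊣ R)
    (hFG : IsQuillenPair MA MB F) (hLR : IsQuillenPair MB MC L)
    (hFGequiv : IsQuillenEquivalence MA MB adjFG)
    (hLFequiv : IsQuillenEquivalence MA MC (adjFG.comp adjLR))
    (hcofA : ∀ X : A, MA.Cof (initial.to X))
    (hfibB : ∀ Y : B, MB.Fib (terminal.from Y)) :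
    IsQuillenEquivalence MB MC adjLR := by
  intro X U hX hU f
  have hεW : MB.W (adjFG.counit.app X) := hFGequiv.W_counit_app (hcofA _) (hfibB X)
  have hLεW : MC.W (L.map (adjFG.counit.app X)) :=
    hLR.W_map_of_cofibrant hεW (hFG.cof_initial_to_obj adjFG (hcofA _)) hX
  have hadjunct : (adjFG.comp adjLR).homEquiv (G.obj X) U (L.map (adjFG.counit.app X) ≫ f) =
      G.map (adjLR.homEquiv X U f) := by
    rw [Adjunction.comp_homEquiv, Equiv.trans_apply, adjLR.homEquiv_naturality_left,
      adjFG.homEquiv_counit_comp]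
    rfl
  calc MC.W f ↔ MC.W (L.map (adjFG.counit.app X) ≫ f) := (MC.W_comp_iff_right hLεW f).symm
    _ ↔ MA.W (G.map (adjLR.homEquiv X U f)) := by
      rw [hLFequiv _ _ (hcofA _) hU, hadjunct]
    _ ↔ MB.W (adjLR.homEquiv X U f) :=
      (hFGequiv.W_iff_W_map _ (hcofA _) (hfibB _) (hfibB _)).symm

theorem quillen_equivalence_of_comp
    {A : Type u₁} [Category.{v₁} A] {B : Type u₂} [Category.{v₂} B] {C : Type u₃} [Category.{v₃} C]
    [HasLimits A] [HasColimits A] [HasLimits B] [HasColimits B] [HasLimits C] [HasColimits C]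
    [HasInitial A] [HasTerminal A] [HasInitial B] [HasTerminal B] [HasInitial C] [HasTerminal C]
    (MA : ModelStructure A) (MB : ModelStructure B) (MC : ModelStructure C)
    {F : A ⥤ B} {G : B ⥤ A} (adjFG : F ⊣ G)
    {L : B ⥤ C} {R : C ⥤ B} (adjLR : L ⊣ R)
    (hFG : IsQuillenPair MA MB F) (hLR : IsQuillenPair MB MC L)
    (hFGequiv : IsQuillenEquivalence MA MB adjFG)
    (hLFequiv : IsQuillenEquivalence MA MC (adjFG.comp adjLR))
    (hcofA : ∀ X : A, MA.Cof (initial.to X))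
    (hfibB : ∀ Y : B, MB.Fib (terminal.from Y)) :
    IsQuillenEquivalence MB MC adjLR :=
  quillen_equivalence_of_comp_general MA MB MC adjFG adjLR hFG hLR hFGequiv hLFequiv hcofA hfibB
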